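/- Let G be a finite connected simple graph on n ≥ 5 vertices whose complement Ḡ is also connected. Then 0 ≤ C(G)·C(Ḡ) < (n(n−1)(n−4)/8)², where the lower bound is attained with equality if and only if G or Ḡ is a tree. -/

import Mathlib

/-!
For an edge `ij` let `x = L⁺(e_i - e_j)` be the potential, so that `Ω = x_i - x_j` is also the
Dirichlet energy `xᵀ L x`. Splitting off the energy of the edge `ij` gives
`Ω = Ω² + (energy of x in G - ij)`, hence `Ω ≤ 1`, with equality exactly for bridges; and
Cauchy–Schwarz for the Laplacian form against `e_i - e_j` gives `4 ≤ (d_i + d_j + 2) Ω`. When `Ḡ`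
is connected every degree is at most `n - 2`, so `1/Ω ≤ (n - 1)/2` and every term of `C(G)`
satisfies `0 ≤ 1/Ω - 1 ≤ (n - 1)/2 · (1 - Ω)`. Summing with Foster's theorem `Σ_E Ω = n - 1`
bounds `C(G)` by `(n - 1)/2` times the slack `|E(G)| - (n - 1)`; the slacks of `G` and `Ḡ` add up
to `(n - 1)(n - 4)/2`, and AM–GM finishes. The pseudoinverse itself is `(L + J/n)⁻¹ - J/n`.
-/

open Matrix Finset

/-- The Moore–Penrose pseudoinverse of a real square matrix, specified (when it exists)
by the four Penrose conditions. -/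
noncomputable def pinv {n : Type*} [Fintype n] [DecidableEq n] (A : Matrix n n ℝ) :
    Matrix n n ℝ :=
  open scoped Classical in
  if h : ∃ B, A * B * A = A ∧ B * A * B = B ∧ (A * B)ᵀ = A * B ∧ (B * A)ᵀ = B * A
  then h.choose else 0

/-- The resistance distance between two vertices of a graph:
`Ω_G(i,j) = (e_i − e_j)ᵀ L⁺ (e_i − e_j)` where `L⁺` is the Moore–Penrose pseudoinverse
of the Laplacian matrix of `G`. -/
noncomputable def resDist {V : Type*} [Fintype V] [DecidableEq V] (G : SimpleGraph V)
    (i j : V) : ℝ :=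
  letI : DecidableRel G.Adj := Classical.decRel _
  (Pi.single i 1 - Pi.single j 1) ⬝ᵥ
    (pinv (G.lapMatrix ℝ)) *ᵥ (Pi.single i 1 - Pi.single j 1)

lemma resDist_comm {V : Type*} [Fintype V] [DecidableEq V] (G : SimpleGraph V) (i j : V) :
    resDist G i j = resDist G j i := by
  unfold resDist
  rw [show (Pi.single j 1 - Pi.single i 1 : V → ℝ)
        = -(Pi.single i 1 - Pi.single j 1) by rw [neg_sub]]
  rw [Matrix.mulVec_neg, dotProduct_neg, neg_dotProduct, neg_neg]

/-- The global cyclicity index `C(G) = Σ_{ij ∈ E(G)} (1/Ω_G(i,j) − 1)`,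
the sum over all edges of `G`. -/
noncomputable def cyclicity {V : Type*} [Fintype V] [DecidableEq V] (G : SimpleGraph V) : ℝ :=
  letI : DecidableRel G.Adj := Classical.decRel _
  ∑ e ∈ G.edgeFinset,
    Sym2.lift ⟨fun i j => 1 / resDist G i j - 1,
      fun i j => by simp only []; rw [resDist_comm G i j]⟩ e

namespace Matrix

variable {n : Type*} [Fintype n]

def IsPenroseInverse (A B : Matrix n n ℝ) : Prop :=
  A * B * A = A ∧ B * A * B = B ∧ (A * B)ᵀ = A * B ∧ (B * A)ᵀ = B * A

theorem IsPenroseInverse.eq {A B C : Matrix n n ℝ} (hB : IsPenroseInverse A B)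
    (hC : IsPenroseInverse A C) : B = C := by
  obtain ⟨hB₁, hB₂, hB₃, hB₄⟩ := hB
  obtain ⟨hC₁, hC₂, hC₃, hC₄⟩ := hC
  have hAB : A * B = A * C := calc
    A * B = A * C * (A * B) := by rw [← Matrix.mul_assoc, hC₁]
    _ = (A * B * (A * C))ᵀ := by rw [transpose_mul, hB₃, hC₃]
    _ = A * C := by rw [← Matrix.mul_assoc, hB₁, hC₃]
  have hBA : B * A = C * A := calc
    B * A = B * A * (C * A) := by rw [Matrix.mul_assoc, ← Matrix.mul_assoc A, hC₁]
    _ = (C * A * (B * A))ᵀ := by rw [transpose_mul, hB₄, hC₄]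
    _ = C * A := by rw [Matrix.mul_assoc C A, ← Matrix.mul_assoc A, hB₁, hC₄]
  calc B = B * A * B := hB₂.symm
    _ = C * A * C := by rw [Matrix.mul_assoc, hAB, ← Matrix.mul_assoc, hBA]
    _ = C := hC₂

theorem pinv_eq_of_isPenroseInverse [DecidableEq n] {A B : Matrix n n ℝ}
    (hB : IsPenroseInverse A B) : pinv A = B := by
  have h : ∃ B, A * B * A = A ∧ B * A * B = B ∧ (A * B)ᵀ = A * B ∧ (B * A)ᵀ = B * A :=
    ⟨B, hB⟩
  rw [pinv, dif_pos h]
  exact IsPenroseInverse.eq h.choose_spec hB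

theorem PosSemidef.sq_dotProduct_mulVec_le {A : Matrix n n ℝ} (hA : A.PosSemidef)
    (x y : n → ℝ) : (y ⬝ᵥ A *ᵥ x) ^ 2 ≤ (y ⬝ᵥ A *ᵥ y) * (x ⬝ᵥ A *ᵥ x) := by
  classical
  have hsymm : y ⬝ᵥ A *ᵥ x = x ⬝ᵥ A *ᵥ y := by
    rw [dotProduct_mulVec, ← mulVec_transpose, dotProduct_comm,
      ← conjTranspose_eq_transpose_of_trivial, hA.isHermitian.eq]
  have h := LinearMap.BilinForm.apply_mul_apply_le_of_forall_zero_le (toLinearMap₂' ℝ A)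
    (fun z ↦ by simpa [toLinearMap₂'_apply'] using hA.dotProduct_mulVec_nonneg z) y x
  simp only [toLinearMap₂'_apply'] at h
  rwa [← hsymm, ← sq] at h

section SingleSubSingle

variable [DecidableEq n] {R : Type*} [CommRing R]

theorem single_sub_single_dotProduct_mulVec (A : Matrix n n R) (i j : n) :
    (Pi.single i 1 - Pi.single j 1) ⬝ᵥ A *ᵥ (Pi.single i 1 - Pi.single j 1) =
      A i i + A j j - A i j - A j i := by
  simp only [mulVec_sub, mulVec_single_one, sub_dotProduct, dotProduct_sub, single_dotProduct,
    one_mul, col_apply]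
  ring

theorem sum_mul_single_sub_single_dotProduct_mulVec {L : Matrix n n R} (hL : Lᵀ = L)
    (hrow : L *ᵥ (fun _ ↦ 1) = 0) (P : Matrix n n R) :
    ∑ a, ∑ b, L a b * ((Pi.single a 1 - Pi.single b 1) ⬝ᵥ P *ᵥ (Pi.single a 1 - Pi.single b 1))
      = -2 * trace (L * P) := by
  have hL' : ∀ a b, L a b = L b a := fun a b ↦ congrFun₂ hL b a
  have hrow' : ∀ a, ∑ b, L a b = 0 := fun a ↦ by
    simpa [mulVec, dotProduct] using congrFun hrow a
  have hcol : ∀ b, ∑ a, L a b = 0 := fun b ↦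
    (Finset.sum_congr rfl fun a _ ↦ hL' a b).trans (hrow' b)
  have h₁ : ∑ a, ∑ b, L a b * P a a = 0 := by simp [← Finset.sum_mul, hrow']
  have h₂ : ∑ a, ∑ b, L a b * P b b = 0 := by
    rw [Finset.sum_comm]
    simp [← Finset.sum_mul, hcol]
  have h₃ : ∑ a, ∑ b, L a b * P a b = trace (L * P) := by
    rw [Finset.sum_comm]
    exact Finset.sum_congr rfl fun b _ ↦ Finset.sum_congr rfl fun a _ ↦ by rw [hL']
  have h₄ : ∑ a, ∑ b, L a b * P b a = trace (L * P) := rfl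
  simp only [single_sub_single_dotProduct_mulVec, mul_sub, mul_add, Finset.sum_sub_distrib,
    Finset.sum_add_distrib, h₁, h₂, h₃, h₄]
  ring

end SingleSubSingle

variable (n) in
/-- The orthogonal projection `J / n` onto the constant vectors. -/
noncomputable def meanProj : Matrix n n ℝ := of fun _ _ ↦ (Fintype.card n : ℝ)⁻¹

theorem meanProj_transpose : (meanProj n)ᵀ = meanProj n := rfl

theorem meanProj_mulVec (x : n → ℝ) :
    meanProj n *ᵥ x = fun _ ↦ (Fintype.card n : ℝ)⁻¹ * ∑ a, x a := by
  ext
  simp [meanProj, mulVec, dotProduct, Finset.mul_sum]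

theorem meanProj_mul_meanProj [Nonempty n] : meanProj n * meanProj n = meanProj n := by
  ext
  simp [meanProj, mul_apply]

theorem trace_meanProj [Nonempty n] : trace (meanProj n) = 1 := by
  simp [trace, meanProj]

end Matrix

namespace SimpleGraph

def sqDiff {V : Type*} (x : V → ℝ) : Sym2 V → ℝ :=
  Sym2.lift ⟨fun a b ↦ (x a - x b) ^ 2, fun _ _ ↦ by ring⟩

@[simp]
theorem sqDiff_mk {V : Type*} (x : V → ℝ) (a b : V) : sqDiff x s(a, b) = (x a - x b) ^ 2 := rfl

noncomputable def edgeResDist {V : Type*} [Fintype V] [DecidableEq V] (G : SimpleGraph V) :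
    Sym2 V → ℝ :=
  Sym2.lift ⟨resDist G, resDist_comm G⟩

@[simp]
theorem edgeResDist_mk {V : Type*} [Fintype V] [DecidableEq V] (G : SimpleGraph V) (i j : V) :
    edgeResDist G s(i, j) = resDist G i j := rfl

variable {V : Type*} [Fintype V] [DecidableEq V] {G : SimpleGraph V} [DecidableRel G.Adj]

section Pseudoinverse

variable (G) in
theorem lapMatrix_mul_meanProj : G.lapMatrix ℝ * meanProj V = 0 := by
  ext i j
  have := congrFun (G.lapMatrix_mulVec_const_eq_zero (R := ℝ)) i
  simp only [mulVec, dotProduct, mul_one, Pi.zero_apply] at this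
  simp [meanProj, mul_apply, ← Finset.sum_mul, this]

variable (G) in
theorem meanProj_mul_lapMatrix : meanProj V * G.lapMatrix ℝ = 0 := by
  rw [← (G.isSymm_lapMatrix ℝ).eq, ← meanProj_transpose, ← transpose_mul,
    lapMatrix_mul_meanProj, transpose_zero]

theorem posDef_lapMatrix_add_meanProj (hG : G.Connected) :
    (G.lapMatrix ℝ + meanProj V).PosDef := by
  have hsymm : (G.lapMatrix ℝ + meanProj V).IsHermitian := by
    rw [IsHermitian, conjTranspose_eq_transpose_of_trivial, transpose_add,
      (G.isSymm_lapMatrix ℝ).eq, meanProj_transpose]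
  refine .of_dotProduct_mulVec_pos hsymm fun x hx ↦ ?_
  have hL := (G.posSemidef_lapMatrix ℝ).dotProduct_mulVec_nonneg x
  have hmean : x ⬝ᵥ (fun _ ↦ (Fintype.card V : ℝ)⁻¹ * ∑ a, x a) =
      (Fintype.card V : ℝ)⁻¹ * (∑ a, x a) ^ 2 := by
    simp only [dotProduct, ← Finset.sum_mul]
    ring
  rw [star_trivial] at hL ⊢
  rw [add_mulVec, dotProduct_add, meanProj_mulVec, hmean]
  rcases hL.lt_or_eq with hpos | hzero
  · positivity
  obtain ⟨v⟩ := hG.nonempty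
  have hconst : ∀ a, x a = x v := fun a ↦
    (G.lapMatrix_toLinearMap₂'_apply'_eq_zero_iff_forall_reachable x).1
      (by rw [toLinearMap₂'_apply', hzero]) a v (hG.preconnected a v)
  have hv : x v ≠ 0 := fun h ↦ hx (funext fun a ↦ (hconst a).trans h)
  have hn : (0 : ℝ) < Fintype.card V := by exact_mod_cast Fintype.card_pos_iff.2 ⟨v⟩
  simp only [hconst, Finset.sum_const, Finset.card_univ, nsmul_eq_mul, ← hzero]
  field_simp
  positivity

theorem isUnit_det_lapMatrix_add_meanProj (hG : G.Connected) :
    IsUnit (G.lapMatrix ℝ + meanProj V).det :=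
  (isUnit_iff_isUnit_det _).mp (posDef_lapMatrix_add_meanProj hG).isUnit

theorem meanProj_mul_inv (hG : G.Connected) :
    meanProj V * (G.lapMatrix ℝ + meanProj V)⁻¹ = meanProj V := by
  have := hG.nonempty
  have hPM : meanProj V * (G.lapMatrix ℝ + meanProj V) = meanProj V := by
    rw [Matrix.mul_add, meanProj_mul_lapMatrix, zero_add, meanProj_mul_meanProj]
  calc meanProj V * (G.lapMatrix ℝ + meanProj V)⁻¹
      = meanProj V * (G.lapMatrix ℝ + meanProj V) * (G.lapMatrix ℝ + meanProj V)⁻¹ := by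
        rw [hPM]
    _ = meanProj V := by
        rw [Matrix.mul_assoc, mul_nonsing_inv _ (isUnit_det_lapMatrix_add_meanProj hG),
          Matrix.mul_one]

theorem inv_mul_meanProj (hG : G.Connected) :
    (G.lapMatrix ℝ + meanProj V)⁻¹ * meanProj V = meanProj V := by
  have := hG.nonempty
  have hMP : (G.lapMatrix ℝ + meanProj V) * meanProj V = meanProj V := by
    rw [Matrix.add_mul, lapMatrix_mul_meanProj, zero_add, meanProj_mul_meanProj]
  calc (G.lapMatrix ℝ + meanProj V)⁻¹ * meanProj V
      = (G.lapMatrix ℝ + meanProj V)⁻¹ * ((G.lapMatrix ℝ + meanProj V) * meanProj V) := by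
        rw [hMP]
    _ = meanProj V := by
        rw [← Matrix.mul_assoc, nonsing_inv_mul _ (isUnit_det_lapMatrix_add_meanProj hG),
          Matrix.one_mul]

theorem lapMatrix_mul_inv_sub_meanProj (hG : G.Connected) :
    G.lapMatrix ℝ * ((G.lapMatrix ℝ + meanProj V)⁻¹ - meanProj V) = 1 - meanProj V := by
  conv_lhs => rw [← add_sub_cancel_right (G.lapMatrix ℝ) (meanProj V)]
  rw [Matrix.mul_sub, Matrix.sub_mul, add_sub_cancel_right,
    mul_nonsing_inv _ (isUnit_det_lapMatrix_add_meanProj hG), meanProj_mul_inv hG,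
    lapMatrix_mul_meanProj, sub_zero]

theorem inv_sub_meanProj_mul_lapMatrix (hG : G.Connected) :
    ((G.lapMatrix ℝ + meanProj V)⁻¹ - meanProj V) * G.lapMatrix ℝ = 1 - meanProj V := by
  conv_lhs => enter [2]; rw [← add_sub_cancel_right (G.lapMatrix ℝ) (meanProj V)]
  rw [Matrix.sub_mul, Matrix.mul_sub, add_sub_cancel_right,
    nonsing_inv_mul _ (isUnit_det_lapMatrix_add_meanProj hG), inv_mul_meanProj hG,
    meanProj_mul_lapMatrix, sub_zero]

theorem pinv_lapMatrix (hG : G.Connected) :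
    pinv (G.lapMatrix ℝ) = (G.lapMatrix ℝ + meanProj V)⁻¹ - meanProj V := by
  have := hG.nonempty
  refine pinv_eq_of_isPenroseInverse ⟨?_, ?_, ?_, ?_⟩
  · rw [lapMatrix_mul_inv_sub_meanProj hG, Matrix.sub_mul, Matrix.one_mul,
      meanProj_mul_lapMatrix, sub_zero]
  · rw [inv_sub_meanProj_mul_lapMatrix hG, Matrix.sub_mul, Matrix.one_mul, Matrix.mul_sub,
      meanProj_mul_inv hG, meanProj_mul_meanProj, sub_self, sub_zero]
  · rw [lapMatrix_mul_inv_sub_meanProj hG, transpose_sub, transpose_one, meanProj_transpose]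
  · rw [inv_sub_meanProj_mul_lapMatrix hG, transpose_sub, transpose_one, meanProj_transpose]

theorem lapMatrix_mul_pinv (hG : G.Connected) :
    G.lapMatrix ℝ * pinv (G.lapMatrix ℝ) = 1 - meanProj V := by
  rw [pinv_lapMatrix hG, lapMatrix_mul_inv_sub_meanProj hG]

end Pseudoinverse

section DirichletEnergy

theorem sum_adj_eq_two_nsmul_sum_edgeFinset {M : Type*} [AddCommMonoid M] (f : Sym2 V → M) :
    ∑ a, ∑ b, (if G.Adj a b then f s(a, b) else 0) = 2 • ∑ e ∈ G.edgeFinset, f e := by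
  calc ∑ a, ∑ b, (if G.Adj a b then f s(a, b) else 0)
      = ∑ d : G.Dart, f d.edge := by
        rw [← Fintype.sum_prod_type', ← Finset.sum_filter]
        exact Finset.sum_bij' (fun p h ↦ ⟨p, (Finset.mem_filter.1 h).2⟩)
          (fun d _ ↦ (d.fst, d.snd)) (by simp) (by simp) (by simp) (by simp) (by simp)
    _ = ∑ e ∈ G.edgeFinset, ∑ d : G.Dart with d.edge = e, f d.edge := by
        rw [Finset.sum_fiberwise_of_maps_to fun d _ ↦ G.mem_edgeFinset.2 d.edge_mem]
    _ = 2 • ∑ e ∈ G.edgeFinset, f e := by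
        rw [Finset.smul_sum]
        refine Finset.sum_congr rfl fun e he ↦ ?_
        rw [Finset.sum_congr rfl fun d hd ↦ congrArg f (Finset.mem_filter.1 hd).2,
          Finset.sum_const, G.dart_edge_fiber_card e (G.mem_edgeFinset.1 he)]

variable (G) in
theorem dotProduct_lapMatrix_mulVec_eq_sum_sqDiff (x : V → ℝ) :
    x ⬝ᵥ G.lapMatrix ℝ *ᵥ x = ∑ e ∈ G.edgeFinset, sqDiff x e := by
  have := sum_adj_eq_two_nsmul_sum_edgeFinset (G := G) (sqDiff x)
  simp only [sqDiff_mk] at this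
  rw [← toLinearMap₂'_apply', lapMatrix_toLinearMap₂', this, two_nsmul]
  ring

theorem dotProduct_lapMatrix_mulVec_eq_sq_add_deleteEdges {i j : V} (hij : G.Adj i j)
    (x : V → ℝ) : x ⬝ᵥ G.lapMatrix ℝ *ᵥ x =
      (x i - x j) ^ 2 + x ⬝ᵥ (G.deleteEdges {s(i, j)}).lapMatrix ℝ *ᵥ x := by
  rw [dotProduct_lapMatrix_mulVec_eq_sum_sqDiff, dotProduct_lapMatrix_mulVec_eq_sum_sqDiff,
    ← Finset.add_sum_erase _ _ (G.mem_edgeFinset.2 (G.mem_edgeSet.2 hij)), sqDiff_mk]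
  congr 1
  refine Finset.sum_congr ?_ fun _ _ ↦ rfl
  ext e
  simp [and_comm]

end DirichletEnergy

section Resistance

variable (G) in
theorem resDist_eq (i j : V) :
    resDist G i j = (Pi.single i 1 - Pi.single j 1) ⬝ᵥ
      pinv (G.lapMatrix ℝ) *ᵥ (Pi.single i 1 - Pi.single j 1) := by
  unfold resDist
  congr!

theorem lapMatrix_mulVec_pinv_mulVec (hG : G.Connected) (i j : V) :
    G.lapMatrix ℝ *ᵥ (pinv (G.lapMatrix ℝ) *ᵥ (Pi.single i 1 - Pi.single j 1)) =
      Pi.single i 1 - Pi.single j 1 := by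
  rw [mulVec_mulVec, lapMatrix_mul_pinv hG, sub_mulVec, one_mulVec, meanProj_mulVec]
  ext
  simp [Finset.sum_sub_distrib]

theorem resDist_eq_sub_of_lapMatrix_mulVec_eq (hG : G.Connected) {i j : V} {x : V → ℝ}
    (hx : G.lapMatrix ℝ *ᵥ x = Pi.single i 1 - Pi.single j 1) : resDist G i j = x i - x j := by
  set y := pinv (G.lapMatrix ℝ) *ᵥ (Pi.single i 1 - Pi.single j 1)
  have hxy : G.lapMatrix ℝ *ᵥ (x - y) = 0 := by
    rw [mulVec_sub, hx, lapMatrix_mulVec_pinv_mulVec hG, sub_self]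
  have := (G.lapMatrix_mulVec_eq_zero_iff_forall_reachable).1 hxy i j (hG.preconnected i j)
  rw [resDist_eq, sub_dotProduct, single_dotProduct, single_dotProduct, one_mul, one_mul]
  simp only [Pi.sub_apply] at this
  linarith

theorem resDist_eq_dotProduct_lapMatrix_mulVec (hG : G.Connected) {i j : V} {x : V → ℝ}
    (hx : G.lapMatrix ℝ *ᵥ x = Pi.single i 1 - Pi.single j 1) :
    resDist G i j = x ⬝ᵥ G.lapMatrix ℝ *ᵥ x := by
  rw [resDist_eq_sub_of_lapMatrix_mulVec_eq hG hx, hx, dotProduct_sub, dotProduct_single,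
    dotProduct_single, mul_one, mul_one]

theorem four_le_mul_resDist (hG : G.Connected) {i j : V} (hij : i ≠ j) :
    4 ≤ ((Pi.single i 1 - Pi.single j 1) ⬝ᵥ G.lapMatrix ℝ *ᵥ (Pi.single i 1 - Pi.single j 1)) *
      resDist G i j := by
  set x := pinv (G.lapMatrix ℝ) *ᵥ (Pi.single i 1 - Pi.single j 1)
  have hx := lapMatrix_mulVec_pinv_mulVec hG i j
  have hCS := (G.posSemidef_lapMatrix ℝ).sq_dotProduct_mulVec_le x (Pi.single i 1 - Pi.single j 1)
  rw [← resDist_eq_dotProduct_lapMatrix_mulVec hG hx, hx] at hCS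
  have huu : (Pi.single i 1 - Pi.single j 1 : V → ℝ) ⬝ᵥ (Pi.single i 1 - Pi.single j 1) = 2 := by
    simp [hij, hij.symm, one_add_one_eq_two]
  rw [huu] at hCS
  linarith

theorem resDist_pos (hG : G.Connected) {i j : V} (hij : i ≠ j) : 0 < resDist G i j := by
  refine pos_of_mul_pos_right (lt_of_lt_of_le four_pos (four_le_mul_resDist hG hij)) ?_
  simpa only [star_trivial] using
    (G.posSemidef_lapMatrix ℝ).dotProduct_mulVec_nonneg (Pi.single i 1 - Pi.single j 1)

theorem resDist_eq_sq_add_deleteEdges (hG : G.Connected) {i j : V} (hij : G.Adj i j)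
    {x : V → ℝ} (hx : G.lapMatrix ℝ *ᵥ x = Pi.single i 1 - Pi.single j 1) :
    resDist G i j = resDist G i j ^ 2 + x ⬝ᵥ (G.deleteEdges {s(i, j)}).lapMatrix ℝ *ᵥ x := by
  conv_lhs => rw [resDist_eq_dotProduct_lapMatrix_mulVec hG hx,
    dotProduct_lapMatrix_mulVec_eq_sq_add_deleteEdges hij,
    ← resDist_eq_sub_of_lapMatrix_mulVec_eq hG hx]

theorem resDist_le_one (hG : G.Connected) {i j : V} (hij : G.Adj i j) : resDist G i j ≤ 1 := by
  have h := resDist_eq_sq_add_deleteEdges hG hij (lapMatrix_mulVec_pinv_mulVec hG i j)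
  have hE := ((G.deleteEdges {s(i, j)}).posSemidef_lapMatrix ℝ).dotProduct_mulVec_nonneg
    (pinv (G.lapMatrix ℝ) *ᵥ (Pi.single i 1 - Pi.single j 1))
  rw [star_trivial] at hE
  nlinarith [resDist_pos hG hij.ne]

theorem resDist_eq_one_iff_isBridge (hG : G.Connected) {i j : V} (hij : G.Adj i j) :
    resDist G i j = 1 ↔ G.IsBridge s(i, j) := by
  obtain ⟨x, hx⟩ : ∃ x, G.lapMatrix ℝ *ᵥ x = Pi.single i 1 - Pi.single j 1 :=
    ⟨_, lapMatrix_mulVec_pinv_mulVec hG i j⟩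
  rw [isBridge_iff]
  constructor
  · intro h1 hreach
    have h := resDist_eq_sq_add_deleteEdges hG hij hx
    rw [h1, one_pow] at h
    have hconst := ((G.deleteEdges {s(i, j)}).lapMatrix_toLinearMap₂'_apply'_eq_zero_iff_forall_reachable
      x).1 (by rw [toLinearMap₂'_apply']; linarith) i j hreach
    have := resDist_eq_sub_of_lapMatrix_mulVec_eq hG hx
    linarith
  · intro hbridge
    classical
    -- Cauchy–Schwarz against the indicator `y` of the side of `i` gives `1 ≤ Ω`.
    set y : V → ℝ := fun v ↦ if (G.deleteEdges {s(i, j)}).Reachable i v then 1 else 0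
    have hyi : y i = 1 := if_pos .rfl
    have hyj : y j = 0 := if_neg hbridge
    have hy : y ⬝ᵥ (G.deleteEdges {s(i, j)}).lapMatrix ℝ *ᵥ y = 0 := by
      rw [← toLinearMap₂'_apply', lapMatrix_toLinearMap₂'_apply'_eq_zero_iff_forall_reachable]
      exact fun a b hab ↦ if_congr ⟨fun h ↦ h.trans hab, fun h ↦ h.trans hab.symm⟩ rfl rfl
    have hyy : y ⬝ᵥ G.lapMatrix ℝ *ᵥ y = 1 := by
      rw [dotProduct_lapMatrix_mulVec_eq_sq_add_deleteEdges hij, hy, hyi, hyj]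
      norm_num
    have hCS := (G.posSemidef_lapMatrix ℝ).sq_dotProduct_mulVec_le x y
    rw [hyy, ← resDist_eq_dotProduct_lapMatrix_mulVec hG hx, hx, dotProduct_sub,
      dotProduct_single, dotProduct_single, hyi, hyj] at hCS
    linarith [resDist_le_one hG hij]

theorem degree_add_two_le_card (hGc : Gᶜ.Connected) [Nontrivial V] (v : V) :
    G.degree v + 2 ≤ Fintype.card V := by
  have h := hGc.preconnected.degree_pos_of_nontrivial v
  rw [degree_compl] at h
  have := G.degree_lt_card_verts v
  omega

theorem one_div_resDist_le (hG : G.Connected) (hGc : Gᶜ.Connected) {i j : V} (hij : G.Adj i j) :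
    1 / resDist G i j ≤ ((Fintype.card V : ℝ) - 1) / 2 := by
  have : Nontrivial V := ⟨i, j, hij.ne⟩
  have h4 := four_le_mul_resDist hG hij.ne
  rw [single_sub_single_dotProduct_mulVec] at h4
  simp [lapMatrix, degMatrix, hij, hij.symm, hij.ne, hij.ne.symm] at h4
  have hi : (G.degree i : ℝ) + 2 ≤ Fintype.card V := by
    exact_mod_cast degree_add_two_le_card hGc i
  have hj : (G.degree j : ℝ) + 2 ≤ Fintype.card V := by
    exact_mod_cast degree_add_two_le_card hGc j
  rw [div_le_div_iff₀ (resDist_pos hG hij.ne) two_pos]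
  nlinarith

theorem sum_adj_resDist (hG : G.Connected) :
    ∑ a, ∑ b, (if G.Adj a b then resDist G a b else 0) = 2 * ((Fintype.card V : ℝ) - 1) := by
  have := hG.nonempty
  have h := sum_mul_single_sub_single_dotProduct_mulVec (G.isSymm_lapMatrix ℝ).eq
    G.lapMatrix_mulVec_const_eq_zero (pinv (G.lapMatrix ℝ))
  rw [lapMatrix_mul_pinv hG, trace_sub, trace_one, trace_meanProj] at h
  have hterm : ∀ a b, G.lapMatrix ℝ a b * ((Pi.single a 1 - Pi.single b 1) ⬝ᵥ
      pinv (G.lapMatrix ℝ) *ᵥ (Pi.single a 1 - Pi.single b 1)) =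
      -(if G.Adj a b then resDist G a b else 0) := fun a b ↦ by
    rcases eq_or_ne a b with rfl | hab
    · simp
    · rw [← resDist_eq]
      by_cases h : G.Adj a b <;> simp [lapMatrix, degMatrix, hab, h]
  simp only [hterm, Finset.sum_neg_distrib] at h
  linarith

/-- Foster's theorem. -/
theorem sum_edgeFinset_edgeResDist (hG : G.Connected) :
    ∑ e ∈ G.edgeFinset, edgeResDist G e = (Fintype.card V : ℝ) - 1 := by
  have h := sum_adj_eq_two_nsmul_sum_edgeFinset (G := G) (edgeResDist G)
  simp only [edgeResDist_mk, sum_adj_resDist hG, two_nsmul] at h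
  linarith

end Resistance

section Cyclicity

theorem cyclicity_eq_sum : cyclicity G = ∑ e ∈ G.edgeFinset, (1 / edgeResDist G e - 1) := by
  rw [cyclicity]
  refine Finset.sum_congr (by congr!) fun e _ ↦ ?_
  induction e using Sym2.ind
  rfl

theorem one_div_edgeResDist_sub_one_nonneg (hG : G.Connected) {e : Sym2 V}
    (he : e ∈ G.edgeFinset) : 0 ≤ 1 / edgeResDist G e - 1 := by
  induction e using Sym2.ind with
  | _ i j =>
    have hij : G.Adj i j := G.mem_edgeFinset.1 he
    rw [edgeResDist_mk, sub_nonneg, le_div_iff₀ (resDist_pos hG hij.ne), one_mul]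
    exact resDist_le_one hG hij

theorem one_div_resDist_sub_one_le (hG : G.Connected) (hGc : Gᶜ.Connected) {i j : V}
    (hij : G.Adj i j) :
    1 / resDist G i j - 1 ≤ ((Fintype.card V : ℝ) - 1) / 2 * (1 - resDist G i j) := by
  have hΩ := resDist_pos hG hij.ne
  calc 1 / resDist G i j - 1 = 1 / resDist G i j * (1 - resDist G i j) := by field_simp
    _ ≤ ((Fintype.card V : ℝ) - 1) / 2 * (1 - resDist G i j) :=
      mul_le_mul_of_nonneg_right (one_div_resDist_le hG hGc hij)
        (sub_nonneg.2 (resDist_le_one hG hij))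

theorem cyclicity_nonneg (hG : G.Connected) : 0 ≤ cyclicity G := by
  rw [cyclicity_eq_sum]
  exact Finset.sum_nonneg fun _ he ↦ one_div_edgeResDist_sub_one_nonneg hG he

theorem cyclicity_eq_zero_iff (hG : G.Connected) : cyclicity G = 0 ↔ G.IsTree := by
  have hterm : ∀ e ∈ G.edgeFinset, (1 / edgeResDist G e - 1 = 0 ↔ G.IsBridge e) := by
    intro e he
    induction e using Sym2.ind with
    | _ i j =>
      rw [edgeResDist_mk, ← resDist_eq_one_iff_isBridge hG (G.mem_edgeFinset.1 he), sub_eq_zero,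
        one_div, inv_eq_one]
  rw [cyclicity_eq_sum,
    Finset.sum_eq_zero_iff_of_nonneg fun _ he ↦ one_div_edgeResDist_sub_one_nonneg hG he]
  refine ⟨fun h ↦ ⟨hG, isAcyclic_iff_forall_isBridge.2 fun e he ↦ ?_⟩, fun ht e he ↦ ?_⟩
  · rw [← G.mem_edgeFinset] at he
    exact (hterm e he).1 (h e he)
  · exact (hterm e he).2 (isAcyclic_iff_forall_isBridge.1 ht.isAcyclic (G.mem_edgeFinset.1 he))

theorem cyclicity_le (hG : G.Connected) (hGc : Gᶜ.Connected) :
    cyclicity G ≤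
      ((Fintype.card V : ℝ) - 1) / 2 * (#G.edgeFinset - ((Fintype.card V : ℝ) - 1)) := by
  have hslack : (#G.edgeFinset : ℝ) - ((Fintype.card V : ℝ) - 1) =
      ∑ e ∈ G.edgeFinset, (1 - edgeResDist G e) := by
    rw [Finset.sum_sub_distrib, sum_edgeFinset_edgeResDist hG]
    simp
  rw [cyclicity_eq_sum, hslack, Finset.mul_sum]
  refine Finset.sum_le_sum fun e he ↦ ?_
  induction e using Sym2.ind with
  | _ i j => exact one_div_resDist_sub_one_le hG hGc (G.mem_edgeFinset.1 he)

variable (G) in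
theorem two_mul_card_edgeFinset_add_card_edgeFinset_compl :
    2 * (#G.edgeFinset + #Gᶜ.edgeFinset) = Fintype.card V * (Fintype.card V - 1) := by
  rw [mul_add, ← sum_degrees_eq_twice_card_edges, ← sum_degrees_eq_twice_card_edges,
    ← Finset.sum_add_distrib]
  have h : ∀ v, G.degree v + Gᶜ.degree v = Fintype.card V - 1 := fun v ↦ by
    have := G.degree_lt_card_verts v
    rw [degree_compl]
    omega
  simp [h]

end Cyclicity

end SimpleGraph

open SimpleGraph in
theorem stmt19 {V : Type*} [Fintype V] [DecidableEq V] (G : SimpleGraph V)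
    (hG : G.Connected) (hGc : Gᶜ.Connected)
    (n : ℕ) (hn : n = Fintype.card V) (h5 : 5 ≤ n) :
    (0 ≤ cyclicity G * cyclicity Gᶜ ∧
      cyclicity G * cyclicity Gᶜ < ((n : ℝ) * ((n : ℝ) - 1) * ((n : ℝ) - 4) / 8) ^ 2) ∧
    (cyclicity G * cyclicity Gᶜ = 0 ↔ G.IsTree ∨ Gᶜ.IsTree) := by
  classical
  subst hn
  have hN : (5 : ℝ) ≤ Fintype.card V := by exact_mod_cast h5
  set N : ℝ := (Fintype.card V : ℝ)
  have hC := cyclicity_nonneg hG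
  have hCc := cyclicity_nonneg hGc
  have hle := cyclicity_le hG hGc
  have hlec := cyclicity_le hGc (by rwa [compl_compl])
  have hE : (#G.edgeFinset : ℝ) + #Gᶜ.edgeFinset = N * (N - 1) / 2 := by
    have h := two_mul_card_edgeFinset_add_card_edgeFinset_compl G
    rw [← Nat.cast_inj (R := ℝ)] at h
    push_cast [Nat.cast_sub (by omega : 1 ≤ Fintype.card V)] at h
    linarith
  set a := (#G.edgeFinset : ℝ) - (N - 1)
  set b := (#Gᶜ.edgeFinset : ℝ) - (N - 1)
  refine ⟨⟨mul_nonneg hC hCc, ?_⟩, by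
    rw [mul_eq_zero, cyclicity_eq_zero_iff hG, cyclicity_eq_zero_iff hGc]⟩
  have h1 : 0 < N - 1 := by linarith
  have h4 : 0 < N - 4 := by linarith
  calc cyclicity G * cyclicity Gᶜ ≤ ((N - 1) / 2 * a) * ((N - 1) / 2 * b) :=
        mul_le_mul hle hlec hCc (hC.trans hle)
    _ ≤ ((N - 1) / 2) ^ 2 * ((a + b) / 2) ^ 2 := by nlinarith [sq_nonneg (a - b)]
    _ = ((N - 1) * (N - 1) * (N - 4) / 8) ^ 2 := by
        rw [show a + b = (N - 1) * (N - 4) / 2 by linarith]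
        ring
    _ < (N * (N - 1) * (N - 4) / 8) ^ 2 :=
        pow_lt_pow_left₀ (by gcongr; linarith) (by positivity) two_ne_zero
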